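/- Let W, X, Y be finite types, C^W := W → ZMod 2, C^X := X → ZMod 2, C^Y := Y → ZMod 2, and let d0 : C^W → C^X and d1 : C^X → C^Y be ZMod 2-linear maps with d1 ∘ d0 = 0. Let S : C^X → ℝ, b ∈ C^Y, and a0 ∈ C^X with d1 a0 = b, and assume the fiber over b is exactly the coset a0 + range d0, i.e. for every a ∈ C^X, d1 a = b holds if and only if there exists v ∈ C^W with a = a0 + d0 v. Let x ∈ C^W and m ∈ C^X (a twisted error) be such that for every v ∈ C^W the real number S(a0 + d0 v + d0 x) − S(a0 + d0 v) − S(a0 + d0 x) + S(a0) − (⟨m, d0 v⟩.val : ℝ)/2 is an integer. Then for every charge configuration c ∈ C^X, Z_S[b, c] = Complex.exp(2 π Complex.I * ((S(a0 + d0 x) − S(a0)) + (⟨c, d0 x⟩.val : ℝ)/2 + (⟨m, a0⟩.val : ℝ)/2)) · Z_S[b, c + m]; in particular Z_S[b, c + m] and Z_S[b, c] have equal absolute value. -/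

import Mathlib

/-!
Substituting `a ↦ a + d0 x` in `Z_S[b, c]`, which preserves the fiber since `d1 ∘ d0 = 0`,
compares the summand at `a + d0 x` with the summand of `Z_S[b, c + m]` at `a = a0 + d0 v`.
Modulo integers, the twisted-error condition says
`S (a + d0 x) - S a = S (a0 + d0 x) - S a0 + ⟨m, d0 v⟩ / 2`, and
`⟨m, d0 v⟩ / 2 ≡ ⟨m, a⟩ / 2 - ⟨m, a0⟩ / 2` is absorbed by shifting the charge to `c + m`.
What remains is a phase independent of `a`, which does not change the absolute value.
-/

open Finset

/-- The pairing `⟨c, a⟩ := Σ_x c x * a x` over `ZMod 2`. -/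
def pairing {X : Type*} [Fintype X] (c a : X → ZMod 2) : ZMod 2 :=
  ∑ x, c x * a x

/-- The path integral `Z_S[b, c]` with action `S`, flux configuration `b` and charge
configuration `c`. -/
noncomputable def pathIntegral {X Y : Type*} [Fintype X] [Fintype Y]
    [DecidableEq X] [DecidableEq Y]
    (d1 : (X → ZMod 2) →ₗ[ZMod 2] (Y → ZMod 2))
    (S : (X → ZMod 2) → ℝ) (b : Y → ZMod 2) (c : X → ZMod 2) : ℂ :=
  ∑ a ∈ Finset.univ.filter (fun a : X → ZMod 2 => d1 a = b),
    Complex.exp (2 * (Real.pi : ℂ) * Complex.I *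
      ((S a + ((pairing c a).val : ℝ) / 2 : ℝ) : ℂ))

lemma pairing_add_left {X : Type*} [Fintype X] (c c' a : X → ZMod 2) :
    pairing (c + c') a = pairing c a + pairing c' a := by
  simp [pairing, add_mul, Finset.sum_add_distrib]

lemma pairing_add_right {X : Type*} [Fintype X] (c a b : X → ZMod 2) :
    pairing c (a + b) = pairing c a + pairing c b := by
  simp [pairing, mul_add, Finset.sum_add_distrib]

lemma ZMod.exists_val_add_add_mul_eq {n : ℕ} [NeZero n] (u v : ZMod n) :
    ∃ k : ℕ, (u + v).val + n * k = u.val + v.val :=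
  ⟨(u.val + v.val) / n, by rw [ZMod.val_add, Nat.mod_add_div]⟩

lemma Complex.exp_two_pi_I_mul_eq_of_exists_int {A B : ℝ} (h : ∃ n : ℤ, A = B + n) :
    Complex.exp (2 * (Real.pi : ℂ) * Complex.I * (A : ℂ)) =
      Complex.exp (2 * (Real.pi : ℂ) * Complex.I * (B : ℂ)) := by
  obtain ⟨n, rfl⟩ := h
  exact Complex.exp_eq_exp_iff_exists_int.2 ⟨n, by push_cast; ring⟩

lemma Complex.norm_exp_two_pi_I_mul_ofReal (t : ℝ) :
    ‖Complex.exp (2 * (Real.pi : ℂ) * Complex.I * (t : ℂ))‖ = 1 := by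
  rw [show 2 * (Real.pi : ℂ) * Complex.I * (t : ℂ) = ((2 * Real.pi * t : ℝ) : ℂ) * Complex.I by
    push_cast; ring]
  exact Complex.norm_exp_ofReal_mul_I _

lemma pathIntegral_eq_sum_add_of_map_eq_zero {X Y : Type*} [Fintype X] [Fintype Y]
    [DecidableEq X] [DecidableEq Y] (d1 : (X → ZMod 2) →ₗ[ZMod 2] (Y → ZMod 2))
    (S : (X → ZMod 2) → ℝ) (b : Y → ZMod 2) (c t : X → ZMod 2) (ht : d1 t = 0) :
    pathIntegral d1 S b c =
      ∑ a ∈ Finset.univ.filter (fun a : X → ZMod 2 => d1 a = b),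
        Complex.exp (2 * (Real.pi : ℂ) * Complex.I *
          ((S (a + t) + ((pairing c (a + t)).val : ℝ) / 2 : ℝ) : ℂ)) := by
  refine (Finset.sum_equiv (Equiv.addRight t) (fun a => ?_) (fun a _ => rfl)).symm
  simp [ht]

lemma exists_int_action_add_eq_phase_add {X : Type*} [Fintype X] (S : (X → ZMod 2) → ℝ)
    (a0 m c u t : X → ZMod 2)
    (hm : ∃ n : ℤ, S (a0 + u + t) - S (a0 + u) - S (a0 + t) + S a0
      - ((pairing m u).val : ℝ) / 2 = (n : ℝ)) :
    ∃ N : ℤ, S (a0 + u + t) + ((pairing c (a0 + u + t)).val : ℝ) / 2 =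
      ((S (a0 + t) - S a0) + ((pairing c t).val : ℝ) / 2 + ((pairing m a0).val : ℝ) / 2)
        + (S (a0 + u) + ((pairing (c + m) (a0 + u)).val : ℝ) / 2) + N := by
  obtain ⟨n, hn⟩ := hm
  obtain ⟨k₁, hk₁⟩ := ZMod.exists_val_add_add_mul_eq (pairing c (a0 + u)) (pairing c t)
  obtain ⟨k₂, hk₂⟩ := ZMod.exists_val_add_add_mul_eq (pairing c (a0 + u)) (pairing m (a0 + u))
  obtain ⟨k₃, hk₃⟩ := ZMod.exists_val_add_add_mul_eq (pairing m a0) (pairing m u)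
  rw [← pairing_add_right] at hk₁ hk₃
  rw [← pairing_add_left] at hk₂
  -- the two copies of `⟨m, a0⟩ / 2` on the right add up to an integer
  refine ⟨n - k₁ + k₂ + k₃ - (pairing m a0).val, ?_⟩
  rify at hk₁ hk₂ hk₃
  push_cast
  linarith

theorem pathIntegral_eq_exp_mul_pathIntegral_add {W X Y : Type*} [Fintype X] [Fintype Y]
    [DecidableEq X] [DecidableEq Y]
    (d0 : (W → ZMod 2) →ₗ[ZMod 2] (X → ZMod 2))
    (d1 : (X → ZMod 2) →ₗ[ZMod 2] (Y → ZMod 2))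
    (hdd : ∀ w : W → ZMod 2, d1 (d0 w) = 0)
    (S : (X → ZMod 2) → ℝ) (b : Y → ZMod 2) (a0 : X → ZMod 2)
    (hfiber : ∀ a : X → ZMod 2, d1 a = b → ∃ v : W → ZMod 2, a = a0 + d0 v)
    (x : W → ZMod 2) (m : X → ZMod 2)
    (hm : ∀ v : W → ZMod 2, ∃ n : ℤ,
      S (a0 + d0 v + d0 x) - S (a0 + d0 v) - S (a0 + d0 x) + S a0
        - ((pairing m (d0 v)).val : ℝ) / 2 = (n : ℝ))
    (c : X → ZMod 2) :
    pathIntegral d1 S b c =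
      Complex.exp (2 * (Real.pi : ℂ) * Complex.I *
        (((S (a0 + d0 x) - S a0) + ((pairing c (d0 x)).val : ℝ) / 2
          + ((pairing m a0).val : ℝ) / 2 : ℝ) : ℂ)) *
        pathIntegral d1 S b (c + m) := by
  rw [pathIntegral_eq_sum_add_of_map_eq_zero d1 S b c (d0 x) (hdd x), pathIntegral,
    Finset.mul_sum]
  refine Finset.sum_congr rfl fun a ha => ?_
  obtain ⟨v, rfl⟩ := hfiber a (Finset.mem_filter.1 ha).2
  rw [← Complex.exp_add, ← mul_add, ← Complex.ofReal_add]
  exact Complex.exp_two_pi_I_mul_eq_of_exists_int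
    (exists_int_action_add_eq_phase_add S a0 m c (d0 v) (d0 x) (hm v))

theorem pathIntegral_twisted_error_equivalence_general
    {W X Y : Type*} [Fintype X] [Fintype Y]
    [DecidableEq X] [DecidableEq Y]
    (d0 : (W → ZMod 2) →ₗ[ZMod 2] (X → ZMod 2))
    (d1 : (X → ZMod 2) →ₗ[ZMod 2] (Y → ZMod 2))
    (hdd : ∀ w : W → ZMod 2, d1 (d0 w) = 0)
    (S : (X → ZMod 2) → ℝ) (b : Y → ZMod 2) (a0 : X → ZMod 2)
    (hfiber : ∀ a : X → ZMod 2, d1 a = b ↔ ∃ v : W → ZMod 2, a = a0 + d0 v)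
    (x : W → ZMod 2) (m : X → ZMod 2)
    (hm : ∀ v : W → ZMod 2, ∃ n : ℤ,
      S (a0 + d0 v + d0 x) - S (a0 + d0 v) - S (a0 + d0 x) + S a0
        - ((pairing m (d0 v)).val : ℝ) / 2 = (n : ℝ)) :
    (∀ c : X → ZMod 2,
      pathIntegral d1 S b c =
        Complex.exp (2 * (Real.pi : ℂ) * Complex.I *
          (((S (a0 + d0 x) - S a0) + ((pairing c (d0 x)).val : ℝ) / 2
            + ((pairing m a0).val : ℝ) / 2 : ℝ) : ℂ)) *
          pathIntegral d1 S b (c + m)) ∧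
    (∀ c : X → ZMod 2,
      ‖pathIntegral d1 S b (c + m)‖ =
        ‖pathIntegral d1 S b c‖) := by
  have hshift := pathIntegral_eq_exp_mul_pathIntegral_add d0 d1 hdd S b a0
    (fun a => (hfiber a).1) x m hm
  refine ⟨hshift, fun c => ?_⟩
  rw [hshift c, norm_mul, Complex.norm_exp_two_pi_I_mul_ofReal, one_mul]

/-- Shifting the charge configuration by a twisted error `m` changes the path integral
only by an overall phase; in particular the absolute values agree. -/
theorem pathIntegral_twisted_error_equivalence
    {W X Y : Type*} [Fintype W] [Fintype X] [Fintype Y]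
    [DecidableEq W] [DecidableEq X] [DecidableEq Y]
    (d0 : (W → ZMod 2) →ₗ[ZMod 2] (X → ZMod 2))
    (d1 : (X → ZMod 2) →ₗ[ZMod 2] (Y → ZMod 2))
    (hdd : ∀ w : W → ZMod 2, d1 (d0 w) = 0)
    (S : (X → ZMod 2) → ℝ) (b : Y → ZMod 2) (a0 : X → ZMod 2)
    (ha0 : d1 a0 = b)
    (hfiber : ∀ a : X → ZMod 2, d1 a = b ↔ ∃ v : W → ZMod 2, a = a0 + d0 v)
    (x : W → ZMod 2) (m : X → ZMod 2)
    (hm : ∀ v : W → ZMod 2, ∃ n : ℤ,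
      S (a0 + d0 v + d0 x) - S (a0 + d0 v) - S (a0 + d0 x) + S a0
        - ((pairing m (d0 v)).val : ℝ) / 2 = (n : ℝ)) :
    (∀ c : X → ZMod 2,
      pathIntegral d1 S b c =
        Complex.exp (2 * (Real.pi : ℂ) * Complex.I *
          (((S (a0 + d0 x) - S a0) + ((pairing c (d0 x)).val : ℝ) / 2
            + ((pairing m a0).val : ℝ) / 2 : ℝ) : ℂ)) *
          pathIntegral d1 S b (c + m)) ∧
    (∀ c : X → ZMod 2,
      ‖pathIntegral d1 S b (c + m)‖ =
        ‖pathIntegral d1 S b c‖) :=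
  pathIntegral_twisted_error_equivalence_general d0 d1 hdd S b a0 hfiber x m hm
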